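/- (Kakeya) Let x : ℕ → ℝ be a sequence of positive terms with Σ_{n≥1} x_n < ∞ and tails R_n = Σ_{i>n} x_i. If x_n > R_n for all sufficiently large n, then the achievement set E(x) is homeomorphic to the Cantor ternary set. -/

import Mathlib

/-!
Let `x n > R n` for `n ≥ N`. Fix the first `k ≥ N` digits of a subsum: the subsums with next digit
`0` lie in an interval of length `R k`, those with next digit `1` lie `x k > R k` further up, so a
preconnected set of such subsums always sits on one side and in the end has diameter at most
`R k → 0`. Hence the subsums with prescribed first `N` digits form a totally disconnected set, and
`E(x)`, a finite union of such compact sets, is nowhere dense. It is also compact, nonempty and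
perfect (flipping a late digit moves a subsum by a small nonzero amount).

Such a subset of `ℝ` is homeomorphic to the Cantor space `ℕ → Bool`: cutting a piece at a missing
point of the middle third of its convex hull produces a Cantor scheme with disjoint children and
diameters shrinking like `(2/3)^n`, whose induced map is a continuous bijection from a compact
space.
-/

/-- The achievement set (set of subsums) of a sequence `x`. -/
def achievementSet (x : ℕ → ℝ) : Set ℝ :=
  {s : ℝ | ∃ ε : ℕ → ℝ, (∀ n, ε n = 0 ∨ ε n = 1) ∧ s = ∑' n, ε n * x n}

/-- The `n`-th tail `R_n = ∑_{i > n} x_i` of a sequence. -/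
noncomputable def seqTail (x : ℕ → ℝ) (n : ℕ) : ℝ := ∑' i : ℕ, x (n + 1 + i)

open Filter Topology Set PiNat CantorScheme

theorem IsPreconnected.subset_or_subset_of_separated {α : Type*} [TopologicalSpace α]
    [LinearOrder α] [OrderClosedTopology α] {S A B : Set α} (hS : IsPreconnected S)
    (hSAB : S ⊆ A ∪ B) {t : α} (hA : A ⊆ Iio t) (hB : B ⊆ Ioi t) : S ⊆ A ∨ S ⊆ B := by
  have hSt : S ⊆ Iio t ∪ Ioi t := hSAB.trans (union_subset_union hA hB)
  rcases hS.subset_or_subset isOpen_Iio isOpen_Ioi Iio_disjoint_Ioi_same hSt with h | h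
  · exact Or.inl fun s hs => (hSAB hs).resolve_right fun hsB => lt_asymm (h hs) (hB hsB)
  · exact Or.inr fun s hs => (hSAB hs).resolve_left fun hsA => lt_asymm (h hs) (hA hsA)

theorem IsTotallyDisconnected.interior_eq_empty {C : Set ℝ} (hC : IsTotallyDisconnected C) :
    interior C = ∅ := by
  refine eq_empty_of_forall_notMem fun z hz => ?_
  obtain ⟨ε, hε, hball⟩ := Metric.isOpen_iff.1 isOpen_interior z hz
  rw [Real.ball_eq_Ioo] at hball
  exact (Ioo_infinite (by linarith)).not_finite
    (hC _ (hball.trans interior_subset) isPreconnected_Ioo).finite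

theorem CantorScheme.VanishingDiam.exists_inducedMap_eq {β α : Type*} [MetricSpace α]
    {A : List β → Set α} (hA : VanishingDiam A) (hcover : ∀ l, A l ⊆ ⋃ b, A (b :: l))
    {y : α} (hy : y ∈ A []) : ∃ x, (inducedMap A).2 x = y := by
  choose next hnext using fun l : {l // y ∈ A l} => mem_iUnion.1 (hcover l.1 l.2)
  let path : ℕ → {l // y ∈ A l} := fun n => Nat.rec ⟨[], hy⟩ (fun _ l => ⟨_, hnext l⟩) n
  let x : ℕ → β := fun n => next (path n)
  have hres : ∀ n, res x n = (path n).1 := by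
    intro n
    induction n with
    | zero => rfl
    | succ n ih => rw [res_succ, ih]
  have hmem : ∀ n, y ∈ A (res x n) := fun n => hres n ▸ (path n).2
  refine ⟨⟨x, y, mem_iInter.2 hmem⟩, eq_of_forall_dist_le fun ε hε => ?_⟩
  obtain ⟨n, hn⟩ := hA.dist_lt ε hε x
  exact (hn _ (map_mem _ n) y (hmem n)).le

structure IsCantorLike (K : Set ℝ) : Prop where
  isCompact : IsCompact K
  nonempty : K.Nonempty
  preperfect : Preperfect K
  interior_eq_empty : interior K = ∅

theorem IsCantorLike.sInf_lt_sSup {P : Set ℝ} (hP : IsCantorLike P) : sInf P < sSup P := by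
  obtain ⟨z, hz⟩ := hP.nonempty
  obtain ⟨w, ⟨-, hw⟩, hwz⟩ := accPt_iff_nhds.1 (hP.preperfect z hz) univ univ_mem
  calc sInf P ≤ min w z := le_min (csInf_le hP.isCompact.bddBelow hw)
        (csInf_le hP.isCompact.bddBelow hz)
    _ < max w z := min_lt_max.2 hwz
    _ ≤ sSup P := max_le (le_csSup hP.isCompact.bddAbove hw) (le_csSup hP.isCompact.bddAbove hz)

-- junk (`Classical.epsilon`) unless `P` misses a point of this middle third
noncomputable def middleGap (P : Set ℝ) : ℝ :=
  Classical.epsilon fun t =>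
    t ∈ Ioo ((2 * sInf P + sSup P) / 3) ((sInf P + 2 * sSup P) / 3) ∧ t ∉ P

theorem IsCantorLike.middleGap_spec {P : Set ℝ} (hP : IsCantorLike P) :
    middleGap P ∈ Ioo ((2 * sInf P + sSup P) / 3) ((sInf P + 2 * sSup P) / 3) ∧
      middleGap P ∉ P := by
  refine Classical.epsilon_spec (p := fun t => _ ∧ t ∉ P) ?_
  by_contra! h
  have hsub : Ioo ((2 * sInf P + sSup P) / 3) ((sInf P + 2 * sSup P) / 3) ⊆ interior P :=
    interior_maximal h isOpen_Ioo
  rw [hP.interior_eq_empty, subset_empty_iff, Ioo_eq_empty_iff] at hsub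
  exact hsub (by linarith [hP.sInf_lt_sSup])

def half (P : Set ℝ) : Bool → Set ℝ
  | false => P ∩ Iio (middleGap P)
  | true => P ∩ Ioi (middleGap P)

theorem half_subset (P : Set ℝ) (b : Bool) : half P b ⊆ P := by
  cases b <;> exact inter_subset_left

theorem disjoint_half (P : Set ℝ) : Disjoint (half P false) (half P true) :=
  Iio_disjoint_Ioi_same.mono inter_subset_right inter_subset_right

namespace IsCantorLike

variable {P : Set ℝ}

theorem half_union (hP : IsCantorLike P) : half P false ∪ half P true = P := by
  rw [half, half, ← inter_union_distrib_left, Iio_union_Ioi, inter_eq_left,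
    subset_compl_singleton_iff]
  exact hP.middleGap_spec.2

theorem isCantorLike_half (hP : IsCantorLike P) (b : Bool) : IsCantorLike (half P b) := by
  obtain ⟨⟨hlo, hhi⟩, hgap⟩ := hP.middleGap_spec
  have hlt := hP.sInf_lt_sSup
  refine ⟨?_, ?_, ?_,
    subset_empty_iff.1 (hP.interior_eq_empty ▸ interior_mono (half_subset P b))⟩
  · -- `middleGap P ∉ P`, so the open half is also `P` cut by a closed half-line
    cases b
    · convert hP.isCompact.inter_right (isClosed_Iic (a := middleGap P)) using 1
      ext z
      exact and_congr_right fun hz =>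
        ⟨fun h => Iio_subset_Iic_self h, fun h => h.lt_of_ne (ne_of_mem_of_not_mem hz hgap)⟩
    · convert hP.isCompact.inter_right (isClosed_Ici (a := middleGap P)) using 1
      ext z
      exact and_congr_right fun hz =>
        ⟨fun h => Ioi_subset_Ici_self h, fun h => h.lt_of_ne (ne_of_mem_of_not_mem hz hgap).symm⟩
  · cases b
    · exact ⟨sInf P, hP.isCompact.sInf_mem hP.nonempty, by simp only [mem_Iio]; linarith⟩
    · exact ⟨sSup P, hP.isCompact.sSup_mem hP.nonempty, by simp only [mem_Ioi]; linarith⟩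
  · cases b
    · rw [half, inter_comm]
      exact hP.preperfect.open_inter isOpen_Iio
    · rw [half, inter_comm]
      exact hP.preperfect.open_inter isOpen_Ioi

theorem diam_half_le (hP : IsCantorLike P) (b : Bool) :
    Metric.diam (half P b) ≤ 2 / 3 * Metric.diam P := by
  obtain ⟨⟨hlo, hhi⟩, -⟩ := hP.middleGap_spec
  rw [Real.diam_eq hP.isCompact.isBounded]
  cases b
  · have hsub : half P false ⊆ Icc (sInf P) (middleGap P) :=
      fun z hz => ⟨csInf_le hP.isCompact.bddBelow hz.1, le_of_lt hz.2⟩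
    calc Metric.diam (half P false) ≤ Metric.diam (Icc (sInf P) (middleGap P)) :=
          Metric.diam_mono hsub (Metric.isBounded_Icc _ _)
      _ = middleGap P - sInf P := Real.diam_Icc (by linarith [hP.sInf_lt_sSup])
      _ ≤ 2 / 3 * (sSup P - sInf P) := by linarith
  · have hsub : half P true ⊆ Icc (middleGap P) (sSup P) :=
      fun z hz => ⟨le_of_lt hz.2, le_csSup hP.isCompact.bddAbove hz.1⟩
    calc Metric.diam (half P true) ≤ Metric.diam (Icc (middleGap P) (sSup P)) :=
          Metric.diam_mono hsub (Metric.isBounded_Icc _ _)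
      _ = sSup P - middleGap P := Real.diam_Icc (by linarith [hP.sInf_lt_sSup])
      _ ≤ 2 / 3 * (sSup P - sInf P) := by linarith

end IsCantorLike

def halvingScheme (K : Set ℝ) : List Bool → Set ℝ
  | [] => K
  | b :: l => half (halvingScheme K l) b

theorem disjoint_halvingScheme (K : Set ℝ) : CantorScheme.Disjoint (halvingScheme K) := by
  intro l a b hab
  cases a <;> cases b
  exacts [absurd rfl hab, disjoint_half _, (disjoint_half _).symm, absurd rfl hab]

namespace IsCantorLike

variable {K : Set ℝ}

theorem isCantorLike_halvingScheme (hK : IsCantorLike K) (l : List Bool) :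
    IsCantorLike (halvingScheme K l) := by
  induction l with
  | nil => exact hK
  | cons b l ih => exact ih.isCantorLike_half b

theorem halvingScheme_subset_iUnion (hK : IsCantorLike K) (l : List Bool) :
    halvingScheme K l ⊆ ⋃ b, halvingScheme K (b :: l) := by
  rw [← (hK.isCantorLike_halvingScheme l).half_union]
  rintro z (hz | hz)
  exacts [mem_iUnion.2 ⟨false, hz⟩, mem_iUnion.2 ⟨true, hz⟩]

theorem diam_halvingScheme_le (hK : IsCantorLike K) (l : List Bool) :
    Metric.diam (halvingScheme K l) ≤ (2 / 3) ^ l.length * Metric.diam K := by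
  induction l with
  | nil => simp [halvingScheme]
  | cons b l ih =>
    calc Metric.diam (halvingScheme K (b :: l))
        ≤ 2 / 3 * Metric.diam (halvingScheme K l) :=
          (hK.isCantorLike_halvingScheme l).diam_half_le b
      _ ≤ 2 / 3 * ((2 / 3) ^ l.length * Metric.diam K) := by gcongr
      _ = (2 / 3) ^ (b :: l).length * Metric.diam K := by rw [List.length_cons, pow_succ]; ring

theorem vanishingDiam_halvingScheme (hK : IsCantorLike K) :
    VanishingDiam (halvingScheme K) := by
  intro x
  have hbound : ∀ n, Metric.ediam (halvingScheme K (res x n)) ≤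
      ENNReal.ofReal ((2 / 3) ^ n * Metric.diam K) := fun n => by
    have hbdd := (hK.isCantorLike_halvingScheme (res x n)).isCompact.isBounded
    have hdiam := hK.diam_halvingScheme_le (res x n)
    rw [res_length] at hdiam
    rw [← ENNReal.ofReal_toReal hbdd.ediam_ne_top]
    exact ENNReal.ofReal_le_ofReal hdiam
  have hlim :
      Tendsto (fun n : ℕ => ENNReal.ofReal ((2 / 3) ^ n * Metric.diam K)) atTop (𝓝 0) := by
    simpa using ENNReal.tendsto_ofReal
      ((tendsto_pow_atTop_nhds_zero_of_lt_one (by norm_num) (by norm_num)).mul_const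
        (Metric.diam K))
  exact tendsto_of_tendsto_of_tendsto_of_le_of_le tendsto_const_nhds hlim (fun _ => zero_le)
    hbound

theorem nonempty_homeomorph_cantorSpace (hK : IsCantorLike K) :
    Nonempty ((ℕ → Bool) ≃ₜ K) := by
  set A := halvingScheme K
  have hdiam : VanishingDiam A := hK.vanishingDiam_halvingScheme
  have hdisj : CantorScheme.Disjoint A := disjoint_halvingScheme K
  have hdom : (inducedMap A).1 = univ :=
    ClosureAntitone.map_of_vanishingDiam hdiam
      (CantorScheme.Antitone.closureAntitone (fun l b => half_subset _ b)
        fun l => (hK.isCantorLike_halvingScheme l).isCompact.isClosed)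
      fun l => (hK.isCantorLike_halvingScheme l).nonempty
  let g : (ℕ → Bool) → (inducedMap A).1 := fun x => ⟨x, hdom ▸ mem_univ x⟩
  let f : (ℕ → Bool) → K := fun x => ⟨(inducedMap A).2 (g x), map_mem (g x) 0⟩
  have hinj : Function.Injective f := fun x y hxy =>
    congrArg Subtype.val (hdisj.map_injective (congrArg Subtype.val hxy) : g x = g y)
  have hsurj : Function.Surjective f := by
    rintro ⟨y, hy⟩
    obtain ⟨x, hx⟩ := hdiam.exists_inducedMap_eq hK.halvingScheme_subset_iUnion hy
    exact ⟨x.1, Subtype.ext hx⟩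
  have hcont : Continuous (Equiv.ofBijective f ⟨hinj, hsurj⟩) :=
    (hdiam.map_continuous.comp (continuous_id.subtype_mk _)).subtype_mk _
  exact ⟨hcont.homeoOfEquivCompactToT2⟩

end IsCantorLike

noncomputable def subsum (x : ℕ → ℝ) (b : ℕ → Bool) : ℝ := ∑' n, if b n then x n else 0

noncomputable def partialSubsum (x : ℕ → ℝ) (b : ℕ → Bool) (k : ℕ) : ℝ :=
  ∑ i ∈ Finset.range k, if b i then x i else 0

section Subsum

variable {x : ℕ → ℝ}

theorem summable_ite_of_summable (hsum : Summable x) (b : ℕ → Bool) :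
    Summable fun n => if b n then x n else 0 :=
  (hsum.indicator {n | b n}).congr fun n => by simp [indicator_apply]

theorem achievementSet_eq_range_subsum (x : ℕ → ℝ) : achievementSet x = range (subsum x) := by
  ext s
  constructor
  · rintro ⟨ε, hε, rfl⟩
    refine ⟨fun n => decide (ε n = 1), tsum_congr fun n => ?_⟩
    rcases hε n with h | h <;> simp [h]
  · rintro ⟨b, rfl⟩
    refine ⟨fun n => if b n then 1 else 0, fun n => ?_, tsum_congr fun n => ?_⟩ <;>
      by_cases hb : b n <;> simp [hb]

theorem continuous_subsum (hsum : Summable x) : Continuous (subsum x) :=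
  continuous_tsum (fun n => (continuous_of_discreteTopology (f := fun v : Bool =>
    if v then x n else 0)).comp (continuous_apply n)) hsum.abs
    fun n b => by split_ifs <;> simp

theorem isCompact_achievementSet (hsum : Summable x) : IsCompact (achievementSet x) :=
  achievementSet_eq_range_subsum x ▸ isCompact_range (continuous_subsum hsum)

theorem achievementSet_nonempty (x : ℕ → ℝ) : (achievementSet x).Nonempty :=
  achievementSet_eq_range_subsum x ▸ range_nonempty _

theorem subsum_update (hsum : Summable x) (b : ℕ → Bool) (n : ℕ) (v : Bool) :
    subsum x (Function.update b n v) =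
      (if v then x n else 0) - (if b n then x n else 0) + subsum x b := by
  have hterms : (fun i => if Function.update b n v i then x i else 0) =
      Function.update (fun i => if b i then x i else 0) n (if v then x n else 0) := by
    funext i
    rcases eq_or_ne i n with rfl | hi <;> simp [*]
  rw [subsum, hterms]
  exact ((summable_ite_of_summable hsum b).hasSum.update n _).tsum_eq

theorem preperfect_achievementSet (hsum : Summable x) (hx : ∀ n, x n ≠ 0) :
    Preperfect (achievementSet x) := by
  rw [achievementSet_eq_range_subsum]
  rintro _ ⟨b, rfl⟩
  -- flipping the `n`-th digit moves the subsum by `± x n`, which is nonzero and tends to `0`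
  have hflip : ∀ n, subsum x (Function.update b n (!b n)) =
      subsum x b + if b n then -x n else x n := fun n => by
    rw [subsum_update hsum]
    cases b n <;> simp <;> ring
  have hstep : Tendsto (fun n => if b n then -x n else x n) atTop (𝓝 0) :=
    squeeze_zero_norm (a := fun n => ‖x n‖) (fun n => by split_ifs <;> simp)
      (by simpa using hsum.tendsto_atTop_zero.norm)
  have hlim :
      Tendsto (fun n => subsum x (Function.update b n (!b n))) atTop (𝓝 (subsum x b)) := by
    simpa [hflip] using tendsto_const_nhds.add hstep
  rw [accPt_iff_frequently]
  refine hlim.frequently (Frequently.of_forall fun n => ⟨?_, mem_range_self _⟩)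
  rw [hflip]
  cases b n <;> simp [hx n]

theorem partialSubsum_eq_of_mem_cylinder {b p : ℕ → Bool} {k : ℕ} (hb : b ∈ cylinder p k) :
    partialSubsum x b k = partialSubsum x p k :=
  Finset.sum_congr rfl fun i hi => by rw [hb i (Finset.mem_range.1 hi)]

theorem partialSubsum_update_succ (p : ℕ → Bool) (k : ℕ) (v : Bool) :
    partialSubsum x (Function.update p k v) (k + 1) =
      partialSubsum x p k + if v then x k else 0 := by
  rw [partialSubsum, Finset.sum_range_succ, Function.update_self]
  congr 1
  exact Finset.sum_congr rfl fun i hi => by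
    rw [Function.update_of_ne (Finset.mem_range.1 hi).ne]

theorem subsum_mem_Icc (hx : ∀ n, 0 ≤ x n) (hsum : Summable x) (b : ℕ → Bool) (k : ℕ) :
    subsum x b ∈ Icc (partialSubsum x b k) (partialSubsum x b k + ∑' i, x (i + k)) := by
  have hterms := summable_ite_of_summable hsum b
  rw [subsum, partialSubsum, ← hterms.sum_add_tsum_nat_add k]
  refine ⟨le_add_of_nonneg_right (tsum_nonneg fun i => ?_), (add_le_add_iff_left _).2 ?_⟩
  · split_ifs <;> simp [hx]
  · exact Summable.tsum_le_tsum (fun i => by split_ifs <;> simp [hx])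
      ((summable_nat_add_iff k).2 hterms) ((summable_nat_add_iff k).2 hsum)

theorem dist_subsum_le_of_mem_cylinder (hx : ∀ n, 0 ≤ x n) (hsum : Summable x)
    {b b' p : ℕ → Bool} {k : ℕ} (hb : b ∈ cylinder p k) (hb' : b' ∈ cylinder p k) :
    dist (subsum x b) (subsum x b') ≤ ∑' i, x (i + k) := by
  have h := subsum_mem_Icc hx hsum b k
  have h' := subsum_mem_Icc hx hsum b' k
  rw [partialSubsum_eq_of_mem_cylinder hb] at h
  rw [partialSubsum_eq_of_mem_cylinder hb'] at h'
  simpa using Real.dist_le_of_mem_Icc h h'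

theorem seqTail_eq_tsum (x : ℕ → ℝ) (k : ℕ) : seqTail x k = ∑' i, x (i + (k + 1)) :=
  tsum_congr fun i => by rw [add_comm]

-- The `k`-th digit splits the subsums of a cylinder into two sets separated by the gap
-- `(seqTail x k, x k)` shifted by the common prefix; a preconnected `S` stays in one of them.
theorem exists_cylinder_succ_of_isPreconnected (hx : ∀ n, 0 ≤ x n) (hsum : Summable x) {k : ℕ}
    (hk : seqTail x k < x k) {S : Set ℝ} (hS : IsPreconnected S) {p : ℕ → Bool}
    (hSp : S ⊆ subsum x '' cylinder p k) : ∃ q, S ⊆ subsum x '' cylinder q (k + 1) := by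
  have hbound : ∀ v b, b ∈ cylinder (Function.update p k v) (k + 1) →
      subsum x b ∈ Icc (partialSubsum x p k + if v then x k else 0)
        (partialSubsum x p k + (if v then x k else 0) + seqTail x k) := fun v b hb => by
    rw [← partialSubsum_update_succ, ← partialSubsum_eq_of_mem_cylinder hb, seqTail_eq_tsum]
    exact subsum_mem_Icc hx hsum b (k + 1)
  set t := partialSubsum x p k + (seqTail x k + x k) / 2
  have hlow : subsum x '' cylinder (Function.update p k false) (k + 1) ⊆ Iio t := by
    rintro _ ⟨b, hb, rfl⟩
    have := (hbound false b hb).2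
    simp only [Bool.false_eq_true, if_false, add_zero] at this
    exact this.trans_lt (by simp only [t]; linarith)
  have hhigh : subsum x '' cylinder (Function.update p k true) (k + 1) ⊆ Ioi t := by
    rintro _ ⟨b, hb, rfl⟩
    have := (hbound true b hb).1
    simp only [if_true] at this
    exact lt_of_lt_of_le (by simp only [t]; linarith) this
  have hcover : S ⊆ subsum x '' cylinder (Function.update p k false) (k + 1) ∪
      subsum x '' cylinder (Function.update p k true) (k + 1) := by
    rw [← iUnion_cylinder_update p k, image_iUnion] at hSp
    intro s hs
    obtain ⟨v, hv⟩ := mem_iUnion.1 (hSp hs)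
    cases v
    exacts [Or.inl hv, Or.inr hv]
  rcases hS.subset_or_subset_of_separated hcover hlow hhigh with h | h
  exacts [⟨_, h⟩, ⟨_, h⟩]

theorem isTotallyDisconnected_image_cylinder (hx : ∀ n, 0 ≤ x n) (hsum : Summable x) {N : ℕ}
    (hN : ∀ n ≥ N, seqTail x n < x n) (p : ℕ → Bool) :
    IsTotallyDisconnected (subsum x '' cylinder p N) := by
  intro S hSp hS
  have hcyl : ∀ k ≥ N, ∃ q, S ⊆ subsum x '' cylinder q k := by
    intro k hk
    induction k, hk using Nat.le_induction with
    | base => exact ⟨p, hSp⟩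
    | succ k hk ih =>
      obtain ⟨q, hq⟩ := ih
      exact exists_cylinder_succ_of_isPreconnected hx hsum (hN k hk) hS hq
  intro s hs s' hs'
  have hdist : ∀ k ≥ N, dist s s' ≤ ∑' i, x (i + k) := by
    intro k hk
    obtain ⟨q, hq⟩ := hcyl k hk
    obtain ⟨b, hb, rfl⟩ := hq hs
    obtain ⟨b', hb', rfl⟩ := hq hs'
    exact dist_subsum_le_of_mem_cylinder hx hsum hb hb'
  exact dist_le_zero.1 (ge_of_tendsto (tendsto_sum_nat_add x) (eventually_atTop.2 ⟨N, hdist⟩))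

theorem interior_achievementSet_eq_empty (hx : ∀ n, 0 ≤ x n) (hsum : Summable x)
    (h : ∀ᶠ n in atTop, seqTail x n < x n) : interior (achievementSet x) = ∅ := by
  obtain ⟨N, hN⟩ := eventually_atTop.1 h
  have hcover : achievementSet x ⊆
      ⋃ F : Finset ℕ, subsum x '' cylinder (fun i => decide (i ∈ F)) N := by
    rw [achievementSet_eq_range_subsum]
    rintro _ ⟨b, rfl⟩
    exact mem_iUnion.2 ⟨(Finset.range N).filter (b ·), b, fun i hi => by simp [hi], rfl⟩
  have hnowhere : ∀ p, IsNowhereDense (subsum x '' cylinder p N) := fun p => by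
    have hclosed : IsClosed (cylinder p N) := by
      rw [cylinder_eq_pi]
      exact isClosed_set_pi fun i _ => isClosed_singleton
    rw [((hclosed.isCompact.image (continuous_subsum hsum)).isClosed).isNowhereDense_iff]
    exact (isTotallyDisconnected_image_cylinder hx hsum hN p).interior_eq_empty
  have hmeagre : IsMeagre (achievementSet x) :=
    (isMeagre_iUnion fun F => (hnowhere _).isMeagre).mono hcover
  by_contra hne
  exact not_isMeagre_of_isOpen isOpen_interior (nonempty_iff_ne_empty.2 hne)
    (hmeagre.mono interior_subset)

end Subsum

/-- (Kakeya) If `x_n > R_n` for all sufficiently large `n`, then the achievement set is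
homeomorphic to the Cantor ternary set. -/
theorem achievementSet_homeomorph_cantorSet_of_tail_lt (x : ℕ → ℝ) (hpos : ∀ n, 0 < x n)
    (hsum : Summable x) (h : ∀ᶠ n in Filter.atTop, seqTail x n < x n) :
    Nonempty (↥(achievementSet x) ≃ₜ ↥cantorSet) := by
  have hK : IsCantorLike (achievementSet x) :=
    ⟨isCompact_achievementSet hsum, achievementSet_nonempty x,
      preperfect_achievementSet hsum fun n => (hpos n).ne',
      interior_achievementSet_eq_empty (fun n => (hpos n).le) hsum h⟩
  obtain ⟨e⟩ := hK.nonempty_homeomorph_cantorSpace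
  exact ⟨e.symm.trans cantorSetHomeomorphNatToBool.symm⟩
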